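/- There is an absolute constant C > 0 such that the following holds. Let p be a prime, let I = [K+1, K+M] ⊆ [1, p-1] be an interval of M integers, let N be an integer with 1 ≤ N < p, let i ≥ 1 be an integer, let α_m (m ∈ I) be complex numbers, and let γ_x (1 ≤ x ≤ p-1) be complex numbers with |γ_x| ≤ min{N, p/‖x‖_p}. Then |∑_{m∈I} ∑_{x : 1 ≤ x ≤ p-1, e^i p/N < ‖x‖_p ≤ e^{i+1} p/N} α_m γ_x e_p(m x̄)| ≤ C e^{-i/2} ‖α‖₂ N^{1/2} p, where ‖α‖₂ = (∑_{m∈I} |α_m|²)^{1/2}. -/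

import Mathlib

/-- `e_p(z) = exp(2πiz/p)`. -/
noncomputable def ep (p : ℕ) (z : ℤ) : ℂ := Complex.exp (2 * Real.pi * Complex.I * z / p)

/-- the multiplicative inverse of `x` modulo `p`, as a natural number -/
def pinv (p x : ℕ) : ℕ := ((x : ZMod p)⁻¹).val

/-- `‖u‖_p`: the distance from `u` to the nearest multiple of `p` -/
def dp (p : ℕ) (u : ℤ) : ℕ := min (u % p).toNat (p - (u % p).toNat)

/-!
Write the double sum as `∑_m α_m T(m)` with `T(m) = ∑_x γ_x e_p(m x̄)`. Cauchy–Schwarz in `m`,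
extending the range of `m` to all residues mod `p`, and Parseval for the primitive character
`e_p` (the frequencies `x̄` are distinct) give `‖α‖₂ (p ∑_x |γ_x|²)^{1/2}`. In the window
`e^i p/N < ‖x‖_p ≤ e^{i+1} p/N` we have `|γ_x| ≤ p/‖x‖_p < N e^{-i}`, and the window holds at
most `2 e^{i+1} p/N` values of `x`, so `p ∑_x |γ_x|² ≤ 2e · e^{-i} N p²`.
-/

open Finset

lemma ep_eq_stdAddChar (p : ℕ) [NeZero p] (z : ℤ) : ep p z = ZMod.stdAddChar (z : ZMod p) :=
  (ZMod.stdAddChar_coe z).symm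

lemma ep_natCast_mul_pinv (p : ℕ) [NeZero p] (m x : ℕ) :
    ep p ((m : ℤ) * pinv p x) = ZMod.stdAddChar ((m : ZMod p) * (x : ZMod p)⁻¹) := by
  rw [ep_eq_stdAddChar]
  push_cast
  rw [pinv, ZMod.natCast_zmod_val]

theorem AddChar.sum_norm_sq_sum_mul_apply {R : Type*} [CommRing R] [Fintype R]
    {ψ : AddChar R ℂ} (hψ : ψ.IsPrimitive) {ι : Type*} (S : Finset ι) {f : ι → R}
    (hf : Set.InjOn f S) (c : ι → ℂ) :
    ∑ m, ‖∑ x ∈ S, c x * ψ (m * f x)‖ ^ 2 = Fintype.card R * ∑ x ∈ S, ‖c x‖ ^ 2 := by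
  classical
  have orthogonality (x y : ι) (hx : x ∈ S) (hy : y ∈ S) :
      ∑ m, ψ (m * (f x - f y)) = if x = y then (Fintype.card R : ℂ) else 0 := by
    rw [sum_mulShift _ hψ, sub_eq_zero, hf.eq_iff hx hy]
    push_cast; rfl
  apply Complex.ofReal_injective
  push_cast
  simp_rw [← Complex.mul_conj', map_sum, map_mul, ← map_neg_eq_conj, sum_mul_sum]
  calc _ = ∑ x ∈ S, ∑ y ∈ S, c x * (starRingEnd ℂ) (c y) * ∑ m, ψ (m * (f x - f y)) := by
        rw [sum_comm]
        refine sum_congr rfl fun x _ => ?_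
        rw [sum_comm]
        refine sum_congr rfl fun y _ => ?_
        rw [mul_sum]
        refine sum_congr rfl fun m _ => ?_
        rw [mul_sub, sub_eq_add_neg, map_add_eq_mul]
        ring
    _ = _ := by
        rw [mul_sum]
        refine sum_congr rfl fun x hx => ?_
        rw [sum_congr rfl fun y hy => by rw [orthogonality x y hx hy, mul_ite, mul_zero],
          sum_ite_eq, if_pos hx, mul_comm]

lemma ZMod.injOn_natCast_range (N : ℕ) : Set.InjOn (Nat.cast : ℕ → ZMod N) (range N) :=
  fun a ha b hb hab => by
    simpa [ZMod.val_cast_of_lt (mem_range.1 ha), ZMod.val_cast_of_lt (mem_range.1 hb)]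
      using congrArg ZMod.val hab

lemma sum_le_sum_zmod_of_subset_range {N : ℕ} [NeZero N] {I : Finset ℕ} (hI : I ⊆ range N)
    {g : ZMod N → ℝ} (hg : ∀ m, 0 ≤ g m) : ∑ m ∈ I, g m ≤ ∑ m, g m := by
  rw [← sum_image ((ZMod.injOn_natCast_range N).mono hI)]
  exact sum_le_univ_sum_of_nonneg hg

lemma injOn_inv_natCast_Icc (p : ℕ) [Fact p.Prime] :
    Set.InjOn (fun x : ℕ => (x : ZMod p)⁻¹) (Icc 1 (p - 1)) :=
  inv_injective.comp_injOn <| (ZMod.injOn_natCast_range p).mono fun x hx => by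
    rw [coe_Icc, Set.mem_Icc] at hx; rw [coe_range, Set.mem_Iio]; omega

theorem norm_sum_sum_mul_ep_pinv_le (p : ℕ) [Fact p.Prime] {I S : Finset ℕ} (hI : I ⊆ range p)
    (hS : S ⊆ Icc 1 (p - 1)) (α γ : ℕ → ℂ) :
    ‖∑ m ∈ I, ∑ x ∈ S, α m * γ x * ep p ((m : ℤ) * pinv p x)‖ ≤
      √(∑ m ∈ I, ‖α m‖ ^ 2) * √(p * ∑ x ∈ S, ‖γ x‖ ^ 2) := by
  set T : ZMod p → ℂ := fun m => ∑ x ∈ S, γ x * ZMod.stdAddChar (m * (x : ZMod p)⁻¹)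
  have hT (m : ℕ) : ∑ x ∈ S, α m * γ x * ep p ((m : ℤ) * pinv p x) = α m * T m := by
    simp only [T, mul_sum, ep_natCast_mul_pinv, mul_assoc]
  have parseval : ∑ m, ‖T m‖ ^ 2 = p * ∑ x ∈ S, ‖γ x‖ ^ 2 := by
    rw [AddChar.sum_norm_sq_sum_mul_apply (ZMod.isPrimitive_stdAddChar p) S
      ((injOn_inv_natCast_Icc p).mono hS), ZMod.card]
  simp_rw [hT]
  calc ‖∑ m ∈ I, α m * T m‖ ≤ ∑ m ∈ I, ‖α m‖ * ‖T m‖ := by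
        simpa only [norm_mul] using norm_sum_le I (fun m => α m * T m)
    _ ≤ √(∑ m ∈ I, ‖α m‖ ^ 2) * √(∑ m ∈ I, ‖T m‖ ^ 2) :=
        Real.sum_mul_le_sqrt_mul_sqrt _ _ _
    _ ≤ √(∑ m ∈ I, ‖α m‖ ^ 2) * √(p * ∑ x ∈ S, ‖γ x‖ ^ 2) := by
        rw [← parseval]
        gcongr
        exact sum_le_sum_zmod_of_subset_range hI (g := fun m => ‖T m‖ ^ 2) fun _ => sq_nonneg _

lemma dp_natCast_of_lt {p x : ℕ} (hx : x < p) : dp p x = min x (p - x) := by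
  rw [dp, Int.emod_eq_of_lt (Int.natCast_nonneg x) (by exact_mod_cast hx), Int.toNat_natCast]

-- Without the ascription `(x : ℕ)` the filter variable would be elaborated in `ℤ`.
lemma card_filter_dp_le (p b : ℕ) : #{x ∈ Icc 1 (p - 1) | dp p (x : ℕ) ≤ b} ≤ 2 * b := by
  have hsub : {x ∈ Icc 1 (p - 1) | dp p (x : ℕ) ≤ b} ⊆ Icc 1 b ∪ Ico (p - b) p := fun x hx => by
    simp only [mem_filter, mem_Icc] at hx
    rw [dp_natCast_of_lt (by omega)] at hx
    simp only [mem_union, mem_Icc, mem_Ico]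
    omega
  calc _ ≤ #(Icc 1 b ∪ Ico (p - b) p) := card_le_card hsub
    _ ≤ #(Icc 1 b) + #(Ico (p - b) p) := card_union_le _ _
    _ ≤ 2 * b := by rw [Nat.card_Icc, Nat.card_Ico]; omega

lemma sum_norm_sq_filter_dp_le (p : ℕ) {A B : ℝ} (hA : 0 < A) (hB : 0 ≤ B) (γ : ℕ → ℂ)
    (hγ : ∀ x ∈ Icc 1 (p - 1), ‖γ x‖ ≤ p / dp p x) :
    ∑ x ∈ Icc 1 (p - 1) with A < dp p (x : ℕ) ∧ dp p x ≤ B, ‖γ x‖ ^ 2 ≤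
      2 * B * (p / A) ^ 2 := by
  set W := {x ∈ Icc 1 (p - 1) | A < dp p (x : ℕ) ∧ dp p x ≤ B}
  have hterm : ∀ x ∈ W, ‖γ x‖ ^ 2 ≤ (p / A) ^ 2 := by
    intro x hx
    rw [mem_filter] at hx
    gcongr
    exact (hγ x hx.1).trans (div_le_div_of_nonneg_left (by positivity) hA hx.2.1.le)
  have hcard : (#W : ℝ) ≤ 2 * B :=
    calc (#W : ℝ) ≤ (2 * ⌊B⌋₊ : ℕ) := by
          refine mod_cast (card_le_card ?_).trans (card_filter_dp_le p _)
          exact monotone_filter_right _ fun _ _ (h : _ ∧ _) => Nat.le_floor h.2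
      _ ≤ 2 * B := by push_cast; linarith [Nat.floor_le hB]
  calc _ ≤ #W * (p / A) ^ 2 := by simpa only [nsmul_eq_mul] using sum_le_card_nsmul _ _ _ hterm
    _ ≤ 2 * B * (p / A) ^ 2 := by gcongr

lemma sqrt_dyadic_window_bound (t : ℝ) {p N : ℝ} (hp : 0 < p) (hN : 0 < N) :
    √(p * (2 * (Real.exp (t + 1) * p / N) * (p / (Real.exp t * p / N)) ^ 2)) ≤
      3 * Real.exp (-t / 2) * √N * p := by
  have hsq : (3 * Real.exp (-t / 2) * √N * p) ^ 2 = 9 * Real.exp (-t) * N * p ^ 2 := by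
    rw [mul_pow, mul_pow, mul_pow, Real.sq_sqrt hN.le, ← Real.exp_nat_mul]
    ring_nf
  have hval : p * (2 * (Real.exp (t + 1) * p / N) * (p / (Real.exp t * p / N)) ^ 2) =
      2 * Real.exp 1 * Real.exp (-t) * N * p ^ 2 := by
    rw [Real.exp_add, Real.exp_neg]
    field_simp
  rw [Real.sqrt_le_iff, hsq, hval]
  refine ⟨by positivity, ?_⟩
  gcongr
  linarith [Real.exp_one_lt_d9]

open scoped Classical in
theorem weighted_sum_dyadic_dist_bound :
    ∃ C : ℝ, 0 < C ∧
      ∀ p K M N : ℕ, p.Prime → 1 ≤ M → K + M ≤ p - 1 → 1 ≤ N → N < p →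
        ∀ i : ℕ, 1 ≤ i → ∀ α γ : ℕ → ℂ,
        (∀ x ∈ Finset.Icc 1 (p - 1), ‖γ x‖ ≤ min (N : ℝ) ((p : ℝ) / (dp p x : ℝ))) →
        ‖∑ m ∈ Finset.Icc (K + 1) (K + M),
            ∑ x ∈ (Finset.Icc 1 (p - 1)).filter
              (fun x : ℕ => Real.exp i * p / N < (dp p x : ℝ) ∧
                (dp p x : ℝ) ≤ Real.exp (i + 1) * p / N),
              α m * γ x * ep p ((m : ℤ) * pinv p x)‖ ≤
          C * Real.exp (-(i : ℝ) / 2) *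
            Real.sqrt (∑ m ∈ Finset.Icc (K + 1) (K + M), ‖α m‖ ^ 2) *
            Real.sqrt N * p := by
  refine ⟨3, by norm_num, fun p K M N hp _ hKM hN _ i _ α γ hγ => ?_⟩
  have : Fact p.Prime := ⟨hp⟩
  have hp0 : (0 : ℝ) < p := by exact_mod_cast hp.pos
  have hN0 : (0 : ℝ) < N := by exact_mod_cast hN
  have hI : Icc (K + 1) (K + M) ⊆ range p := fun m hm => by
    rw [mem_Icc] at hm; rw [mem_range]; omega
  have hwindow := sum_norm_sq_filter_dp_le p (A := Real.exp i * p / N)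
    (B := Real.exp (i + 1) * p / N) (by positivity) (by positivity) γ
    fun x hx => (hγ x hx).trans (min_le_right _ _)
  refine (norm_sum_sum_mul_ep_pinv_le p hI (filter_subset _ _) α γ).trans ?_
  calc _ ≤ √(∑ m ∈ Icc (K + 1) (K + M), ‖α m‖ ^ 2) *
          √(p * (2 * (Real.exp (i + 1) * p / N) * (p / (Real.exp i * p / N)) ^ 2)) := by
        gcongr
    _ ≤ √(∑ m ∈ Icc (K + 1) (K + M), ‖α m‖ ^ 2) * (3 * Real.exp (-(i : ℝ) / 2) * √N * p) := by
        gcongr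
        exact sqrt_dyadic_window_bound i hp0 hN0
    _ = _ := by ring
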